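/- arXiv:2511.10914 — 9 statements merged into one kernel-verified Lean document; each statement's English description precedes it below -/
import Mathlib

section
/- Let V be a finite set and F : 2^V → ℝ a normalized, monotone, submodular set function. Let k ≥ 1 and let S_greedy = S_k be produced by the greedy algorithm: S_0 = ∅ and, for i = 1,…,k, S_i = S_{i−1} ∪ {v_i} where v_i ∈ V \ S_{i−1} maximizes the marginal gain ρ_v(S_{i−1}) over all v ∈ V \ S_{i−1} (assume |V| ≥ k). Then for every subset T ⊆ V with |T| ≤ k, F(S_greedy) ≥ (1 − 1/e) · F(T); in particular F(S_greedy) ≥ (1 − 1/e) · F(S_OPT) where S_OPT is an optimal subset of size k. -/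
/-- **Greedy (1 − 1/e)-approximation for monotone submodular maximization.**
`V` is the (finite) ground set, realized as `Finset.univ` over a `Fintype α`.
`F` is normalized (`F ∅ = 0`), monotone, and submodular.  The greedy sequence
is `S i = {v 0, …, v (i-1)}` where each `v i ∉ S i` maximizes the marginal
gain over all remaining elements.  Then for every `T ⊆ V` with `|T| ≤ k`,
`F (S k) ≥ (1 − 1/e) · F T`. -/
theorem greedy_one_sub_inv_e_approx
    {α : Type*} [DecidableEq α] [Fintype α]
    (F : Finset α → ℝ)
    (hnorm : F ∅ = 0)
    (hmono : ∀ A B : Finset α, A ⊆ B → F A ≤ F B)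
    (hsub : ∀ A B : Finset α, A ⊆ B → ∀ e ∉ B,
      F (insert e B) - F B ≤ F (insert e A) - F A)
    (k : ℕ) (hk : 1 ≤ k) (hcard : k ≤ Fintype.card α)
    (v : ℕ → α) (S : ℕ → Finset α)
    (hS : ∀ i, S i = (Finset.range i).image v)
    (hnotin : ∀ i < k, v i ∉ S i)
    (hmax : ∀ i < k, ∀ w ∉ S i,
      F (insert w (S i)) - F (S i) ≤ F (insert (v i) (S i)) - F (S i))
    (T : Finset α) (hT : T.card ≤ k) :
    (1 - (Real.exp 1)⁻¹) * F T ≤ F (S k) := by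
  classical
  -- key submodular lemma
  have key : ∀ (B A : Finset α),
      F (A ∪ B) ≤ F A + ∑ e ∈ B \ A, (F (insert e A) - F A) := by
    intro B
    induction B using Finset.induction_on with
    | empty => intro A; simp
    | @insert e B henotB ih =>
      intro A
      by_cases heA : e ∈ A
      · have h1 : A ∪ insert e B = A ∪ B := by
          rw [Finset.union_insert, Finset.insert_eq_self.2 (Finset.mem_union_left _ heA)]
        have h2 : insert e B \ A = B \ A := Finset.insert_sdiff_of_mem _ heA
        rw [h1, h2]; exact ih A
      · have heAB : e ∉ A ∪ B := by simp [heA, henotB]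
        have h1 : A ∪ insert e B = insert e (A ∪ B) := Finset.union_insert _ _ _
        have h2 : insert e B \ A = insert e (B \ A) :=
          Finset.insert_sdiff_of_notMem _ heA
        have h3 : e ∉ B \ A := fun h => henotB (Finset.mem_sdiff.1 h).1
        rw [h1, h2, Finset.sum_insert h3]
        have h4 := hsub A (A ∪ B) Finset.subset_union_left e heAB
        have h5 := ih A
        linarith
  have hS0 : S 0 = ∅ := by simp [hS 0]
  have hstep : ∀ i, S (i + 1) = insert (v i) (S i) := by
    intro i; rw [hS, hS, Finset.range_add_one, Finset.image_insert]
  have hFT0 : 0 ≤ F T := hnorm ▸ hmono ∅ T (Finset.empty_subset T)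
  have hk0 : (0 : ℝ) < k := by exact_mod_cast hk
  obtain ⟨c, hc⟩ : ∃ c : ℝ, c = 1 - 1 / (k : ℝ) := ⟨_, rfl⟩
  have hc0 : 0 ≤ c := by
    have h1 : (1 : ℝ) ≤ k := by exact_mod_cast hk
    have := (div_le_one hk0).2 h1
    rw [hc, sub_nonneg]; exact this
  have main : ∀ i ≤ k, F T - F (S i) ≤ c ^ i * F T := by
    intro i
    induction i with
    | zero => intro _; simp [hS0, hnorm]
    | succ i ih =>
      intro hik
      have hik' : i < k := hik
      have ih' := ih (le_of_lt hik')
      have hg0 : 0 ≤ F (insert (v i) (S i)) - F (S i) :=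
        sub_nonneg.2 (hmono _ _ (Finset.subset_insert _ _))
      have h2 : F T - F (S i) ≤ (k : ℝ) * (F (insert (v i) (S i)) - F (S i)) := by
        have hkey := key T (S i)
        have hsum : ∑ e ∈ T \ S i, (F (insert e (S i)) - F (S i))
            ≤ (T \ S i).card • (F (insert (v i) (S i)) - F (S i)) := by
          apply Finset.sum_le_card_nsmul
          intro e he
          exact hmax i hik' e (Finset.mem_sdiff.1 he).2
        rw [nsmul_eq_mul] at hsum
        have hcardle : ((T \ S i).card : ℝ) ≤ (k : ℝ) := by
          have h := le_trans (Finset.card_le_card (Finset.sdiff_subset (s := T) (t := S i))) hT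
          exact_mod_cast h
        have hmonoT : F T ≤ F (S i ∪ T) := hmono _ _ Finset.subset_union_right
        nlinarith [mul_le_mul_of_nonneg_right hcardle hg0]
      have h4 : (F T - F (S i)) / (k : ℝ) ≤ F (insert (v i) (S i)) - F (S i) :=
        (div_le_iff₀ hk0).2 (by linarith)
      have h5 : c * (F T - F (S i)) = (F T - F (S i)) - (F T - F (S i)) / (k : ℝ) := by
        rw [hc]; ring
      have h3 : F T - F (S (i + 1)) ≤ c * (F T - F (S i)) := by
        rw [hstep]; linarith
      calc F T - F (S (i + 1)) ≤ c * (F T - F (S i)) := h3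
        _ ≤ c * (c ^ i * F T) := mul_le_mul_of_nonneg_left ih' hc0
        _ = c ^ (i + 1) * F T := by ring
  have hmk := main k le_rfl
  have hce : c ≤ Real.exp (-(1 / (k : ℝ))) := by
    have := Real.add_one_le_exp (-(1 / (k : ℝ)))
    rw [hc]; linarith
  have hpow : c ^ k ≤ (Real.exp 1)⁻¹ := by
    calc c ^ k ≤ (Real.exp (-(1 / (k : ℝ)))) ^ k := pow_le_pow_left₀ hc0 hce k
      _ = Real.exp ((k : ℝ) * (-(1 / (k : ℝ)))) := (Real.exp_nat_mul _ k).symm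
      _ = Real.exp (-1) := by
          congr 1
          field_simp
      _ = (Real.exp 1)⁻¹ := Real.exp_neg 1
  have : c ^ k * F T ≤ (Real.exp 1)⁻¹ * F T := mul_le_mul_of_nonneg_right hpow hFT0
  linarith
end

section
/- Let V be a finite set and F : 2^V → ℝ a normalized, monotone, submodular set function. Let k ≥ 1 and let S_0 = ∅ and S_i = S_{i−1} ∪ {v_i} for i = 1,…,k, where v_i ∈ V \ S_{i−1} maximizes the marginal gain ρ_v(S_{i−1}) over all v ∈ V \ S_{i−1} (assume |V| ≥ k). Then for every subset T ⊆ V with |T| ≤ k, F(S_k) ≥ (1 − (1 − 1/k)^k) · F(T). -/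
/-- Submodularity summation: `F (A ∪ T) - F A ≤ ∑_{e ∈ T \ A} (F (A∪{e}) - F A)`. -/
lemma greedy_aux_sum {α : Type*} [DecidableEq α] (F : Finset α → ℝ)
    (hsub : ∀ A B : Finset α, A ⊆ B → ∀ e ∉ B,
      F (insert e B) - F B ≤ F (insert e A) - F A)
    (A : Finset α) :
    ∀ T : Finset α, F (A ∪ T) - F A ≤ ∑ e ∈ T \ A, (F (insert e A) - F A) := by
  intro T
  induction T using Finset.induction_on with
  | empty => simp
  | @insert a T haT ih =>
    by_cases haA : a ∈ A
    · have h1 : A ∪ insert a T = A ∪ T := by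
        ext x; simp only [Finset.mem_union, Finset.mem_insert]
        constructor
        · rintro (h | rfl | h) <;> [exact Or.inl h; exact Or.inl haA; exact Or.inr h]
        · rintro (h | h) <;> [exact Or.inl h; exact Or.inr (Or.inr h)]
      have h2 : insert a T \ A = T \ A := by
        ext x; simp only [Finset.mem_sdiff, Finset.mem_insert]
        constructor
        · rintro ⟨h | h, hx⟩
          · exact absurd (h ▸ haA) hx
          · exact ⟨h, hx⟩
        · rintro ⟨h, hx⟩; exact ⟨Or.inr h, hx⟩
      rw [h1, h2]; exact ih
    · have h1 : A ∪ insert a T = insert a (A ∪ T) := Finset.union_insert a A T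
      have h2 : insert a T \ A = insert a (T \ A) := by
        ext x
        simp only [Finset.mem_sdiff, Finset.mem_insert]
        constructor
        · rintro ⟨h | h, hx⟩ <;> [exact Or.inl h; exact Or.inr ⟨h, hx⟩]
        · rintro (rfl | ⟨h, hx⟩) <;> [exact ⟨Or.inl rfl, haA⟩; exact ⟨Or.inr h, hx⟩]
      have haTA : a ∉ T \ A := fun h => haT (Finset.mem_sdiff.mp h).1
      have hnotin : a ∉ A ∪ T := by
        simp only [Finset.mem_union]; rintro (h | h); exacts [haA h, haT h]
      have key := hsub A (A ∪ T) Finset.subset_union_left a hnotin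
      rw [h1, h2, Finset.sum_insert haTA]
      linarith

/-- **Greedy `(1 − (1 − 1/k)^k)`-approximation for monotone submodular maximization.**
With `F` normalized, monotone and submodular on the finite ground set `V = univ`,
and `S i` the greedy sequence (each `v i ∉ S i` maximizes the marginal gain over
remaining elements), for every `T ⊆ V` with `|T| ≤ k` we have
`F (S k) ≥ (1 − (1 − 1/k)^k) · F T`. -/
theorem greedy_one_sub_pow_approx
    {α : Type*} [DecidableEq α] [Fintype α]
    (F : Finset α → ℝ)
    (hnorm : F ∅ = 0)
    (hmono : ∀ A B : Finset α, A ⊆ B → F A ≤ F B)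
    (hsub : ∀ A B : Finset α, A ⊆ B → ∀ e ∉ B,
      F (insert e B) - F B ≤ F (insert e A) - F A)
    (k : ℕ) (hk : 1 ≤ k) (hcard : k ≤ Fintype.card α)
    (v : ℕ → α) (S : ℕ → Finset α)
    (hS : ∀ i, S i = (Finset.range i).image v)
    (hnotin : ∀ i < k, v i ∉ S i)
    (hmax : ∀ i < k, ∀ w ∉ S i,
      F (insert w (S i)) - F (S i) ≤ F (insert (v i) (S i)) - F (S i))
    (T : Finset α) (hT : T.card ≤ k) :
    (1 - (1 - 1 / (k : ℝ)) ^ k) * F T ≤ F (S k) := by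
  have hk0 : (0:ℝ) < k := by exact_mod_cast hk
  have hk1 : (1:ℝ) ≤ k := by exact_mod_cast hk
  have hq0 : (0:ℝ) ≤ 1 - 1 / k := by
    have : 1 / (k:ℝ) ≤ 1 := by
      rw [div_le_one hk0]; exact hk1
    linarith
  have main : ∀ i ≤ k, F T - F (S i) ≤ (1 - 1 / (k:ℝ)) ^ i * F T := by
    intro i hi
    induction i with
    | zero =>
      have : S 0 = ∅ := by rw [hS]; simp
      rw [this, hnorm]; simp
    | succ i ih =>
      have hik : i < k := Nat.lt_of_succ_le hi
      have ihi := ih (Nat.le_of_lt hik)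
      have hSsucc : S (i+1) = insert (v i) (S i) := by
        rw [hS, hS, Finset.range_add_one, Finset.image_insert]
      set ρ : ℝ := F (insert (v i) (S i)) - F (S i) with hρdef
      have hρ0 : 0 ≤ ρ := by
        have := hmono (S i) (insert (v i) (S i)) (Finset.subset_insert _ _)
        linarith
      -- sum bound
      have hsum := greedy_aux_sum F hsub (S i) T
      have hterm : ∀ e ∈ T \ S i, F (insert e (S i)) - F (S i) ≤ ρ := by
        intro e he
        exact hmax i hik e (Finset.mem_sdiff.mp he).2
      have hsum2 : ∑ e ∈ T \ S i, (F (insert e (S i)) - F (S i))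
          ≤ ((T \ S i).card : ℝ) * ρ := by
        calc ∑ e ∈ T \ S i, (F (insert e (S i)) - F (S i))
            ≤ ∑ _e ∈ T \ S i, ρ := Finset.sum_le_sum hterm
          _ = ((T \ S i).card : ℝ) * ρ := by rw [Finset.sum_const, nsmul_eq_mul]
      have hcardle : ((T \ S i).card : ℝ) ≤ k := by
        have h1 : (T \ S i).card ≤ T.card := Finset.card_le_card (Finset.sdiff_subset)
        exact_mod_cast le_trans h1 hT
      have hsum3 : ((T \ S i).card : ℝ) * ρ ≤ (k:ℝ) * ρ :=
        mul_le_mul_of_nonneg_right hcardle hρ0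
      have hTmono : F T ≤ F (S i ∪ T) := hmono _ _ Finset.subset_union_right
      have hkey : F T - F (S i) ≤ (k:ℝ) * ρ := by linarith
      -- contraction
      have hcontr : F T - F (S (i+1)) ≤ (1 - 1 / (k:ℝ)) * (F T - F (S i)) := by
        rw [hSsucc]
        have hdiv : (1 / (k:ℝ)) * (F T - F (S i)) ≤ ρ := by
          have := mul_le_mul_of_nonneg_left hkey (by positivity : (0:ℝ) ≤ 1 / k)
          have hkk : (1 / (k:ℝ)) * ((k:ℝ) * ρ) = ρ := by field_simp
          linarith [this, hkk ▸ this]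
        nlinarith
      calc F T - F (S (i+1)) ≤ (1 - 1 / (k:ℝ)) * (F T - F (S i)) := hcontr
        _ ≤ (1 - 1 / (k:ℝ)) * ((1 - 1 / (k:ℝ)) ^ i * F T) :=
            mul_le_mul_of_nonneg_left ihi hq0
        _ = (1 - 1 / (k:ℝ)) ^ (i+1) * F T := by ring
  have := main k le_rfl
  linarith
end

section
/- Let V be a finite set and F : 2^V → ℝ a monotone, submodular set function, let k ≥ 1, and let T ⊆ V with |T| ≤ k. Suppose S ⊆ V with S ≠ V and let v ∈ V \ S maximize the marginal gain ρ_v(S) over all elements of V \ S. Then F(T) − F(S ∪ {v}) ≤ (1 − 1/k) · (F(T) − F(S)). In particular, one greedy step reduces the gap to any size-≤k optimum by a factor at least (1 − 1/k). -/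
/-- **One greedy step shrinks the gap by a factor `(1 − 1/k)`.**
If `F` is monotone and submodular on the finite ground set `V = univ`,
`T ⊆ V` has `|T| ≤ k`, `S ≠ V`, and `v ∉ S` maximizes the marginal gain
over all elements of `V \ S`, then
`F T − F (S ∪ {v}) ≤ (1 − 1/k) · (F T − F S)`. -/
theorem greedy_step_gap_contraction
    {α : Type*} [DecidableEq α] [Fintype α]
    (F : Finset α → ℝ)
    (hmono : ∀ A B : Finset α, A ⊆ B → F A ≤ F B)
    (hsub : ∀ A B : Finset α, A ⊆ B → ∀ e ∉ B,
      F (insert e B) - F B ≤ F (insert e A) - F A)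
    (k : ℕ) (hk : 1 ≤ k)
    (T : Finset α) (hT : T.card ≤ k)
    (S : Finset α) (hSne : S ≠ Finset.univ)
    (v : α) (hv : v ∉ S)
    (hmax : ∀ w ∉ S, F (insert w S) - F S ≤ F (insert v S) - F S) :
    F T - F (insert v S) ≤ (1 - 1 / (k : ℝ)) * (F T - F S) := by
  set ρ : ℝ := F (insert v S) - F S with hρ
  have hρ0 : 0 ≤ ρ := by
    have := hmono S (insert v S) (Finset.subset_insert v S)
    linarith
  -- key claim: F (S ∪ T) - F S ≤ T.card * ρ
  have key : ∀ U : Finset α, F (S ∪ U) - F S ≤ (U.card : ℝ) * ρ := by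
    intro U
    induction U using Finset.induction_on with
    | empty => simp
    | @insert e U he ih =>
      rw [Finset.union_insert]
      by_cases heS : e ∈ S ∪ U
      · rw [Finset.insert_eq_self.mpr heS]
        calc F (S ∪ U) - F S ≤ (U.card : ℝ) * ρ := ih
          _ ≤ ((insert e U).card : ℝ) * ρ := by
              apply mul_le_mul_of_nonneg_right _ hρ0
              exact_mod_cast Finset.card_le_card (Finset.subset_insert e U)
      · have heS' : e ∉ S := fun h => heS (Finset.mem_union_left _ h)
        have h1 : F (insert e (S ∪ U)) - F (S ∪ U) ≤ F (insert e S) - F S :=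
          hsub S (S ∪ U) Finset.subset_union_left e heS
        have h2 : F (insert e S) - F S ≤ ρ := hmax e heS'
        have hcard : (insert e U).card = U.card + 1 := Finset.card_insert_of_notMem he
        have : F (insert e (S ∪ U)) - F S ≤ ((U.card : ℝ) + 1) * ρ := by nlinarith
        rw [hcard]; push_cast; linarith
  have hgap : F T - F S ≤ (k : ℝ) * ρ := by
    have h1 : F T ≤ F (S ∪ T) := hmono T (S ∪ T) Finset.subset_union_right
    have h2 := key T
    have h3 : (T.card : ℝ) * ρ ≤ (k : ℝ) * ρ := by
      apply mul_le_mul_of_nonneg_right _ hρ0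
      exact_mod_cast hT
    linarith
  have hkpos : (0 : ℝ) < k := by exact_mod_cast hk
  rw [sub_mul, one_mul]
  have : (1 / (k : ℝ)) * (F T - F S) ≤ ρ := by
    rw [div_mul_eq_mul_div, one_mul, div_le_iff₀ hkpos]
    linarith [mul_comm ρ (k : ℝ)]
  linarith
end

section
/- Let V be a finite set and F : 2^V → ℝ a monotone, submodular set function. Then for all subsets S, T ⊆ V, F(T) ≤ F(S) + Σ_{j ∈ T \ S} ρ_j(S), where ρ_j(S) = F(S ∪ {j}) − F(S) is the marginal gain of j with respect to S. -/
lemma aux_bound {α : Type*} [DecidableEq α] [Fintype α]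
    (F : Finset α → ℝ)
    (hsub : ∀ A B : Finset α, A ⊆ B → ∀ e ∉ B,
      F (insert e B) - F B ≤ F (insert e A) - F A)
    (S : Finset α) :
    ∀ D : Finset α, Disjoint D S →
      F (S ∪ D) ≤ F S + ∑ j ∈ D, (F (insert j S) - F S) := by
  intro D
  induction D using Finset.induction_on with
  | empty => simp
  | @insert a D ha ih =>
    intro hdisj
    have hdisj' : Disjoint D S := by
      exact hdisj.mono_left (Finset.subset_insert a D)
    have haS : a ∉ S := by
      intro h
      exact (Finset.disjoint_left.mp hdisj (Finset.mem_insert_self a D)) h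
    have hanot : a ∉ S ∪ D := by simp [haS, ha]
    have h1 : F (insert a (S ∪ D)) - F (S ∪ D) ≤ F (insert a S) - F S :=
      hsub S (S ∪ D) Finset.subset_union_left a hanot
    have h2 := ih hdisj'
    have : S ∪ insert a D = insert a (S ∪ D) := by
      ext x; simp [or_comm, or_assoc, or_left_comm]
    rw [this, Finset.sum_insert ha]
    linarith

/-- **Marginal-gain upper bound for monotone submodular functions.**
For a monotone submodular `F` on the finite ground set `V = univ` and any
`S, T ⊆ V`:  `F T ≤ F S + Σ_{j ∈ T \ S} ρ_j(S)`, where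
`ρ_j(S) = F (S ∪ {j}) − F S`. -/
theorem submodular_bound_by_marginal_gains
    {α : Type*} [DecidableEq α] [Fintype α]
    (F : Finset α → ℝ)
    (hmono : ∀ A B : Finset α, A ⊆ B → F A ≤ F B)
    (hsub : ∀ A B : Finset α, A ⊆ B → ∀ e ∉ B,
      F (insert e B) - F B ≤ F (insert e A) - F A)
    (S T : Finset α) :
    F T ≤ F S + ∑ j ∈ T \ S, (F (insert j S) - F S) := by
  have h1 : F T ≤ F (S ∪ (T \ S)) := by
    apply hmono
    intro x hx
    by_cases hxS : x ∈ S <;> simp [hx, hxS]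
  have h2 := aux_bound F hsub S (T \ S) (Finset.sdiff_disjoint)
  linarith
end

section
/- Let V be a finite set and F : 2^V → ℝ a supermodular set function. Let s_1, …, s_n (n = |V|) be an insertion order of all of V in which each element has minimal gain: with S_0 = ∅ and S_j = S_{j−1} ∪ {s_j}, each s_j ∈ V \ S_{j−1} minimizes the marginal gain ρ_s(S_{j−1}) over all s ∈ V \ S_{j−1}. Then the sequence of marginal gains is non-decreasing, ρ_{s_{j+1}}(S_j) ≥ ρ_{s_j}(S_{j−1}) for all 1 ≤ j ≤ n−1; equivalently, the insertion curve j ↦ F(S_j) is discretely convex: F(S_{j+1}) + F(S_{j−1}) ≥ 2 F(S_j) for all 1 ≤ j ≤ n−1. -/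
/-- **Minimal-gain insertion of a supermodular function yields non-decreasing
gains, i.e. a discretely convex insertion curve.**  Let `s 0, …, s (n-1)`
(with `n = |V|`) insert all of `V = univ`: `S j = {s 0, …, s (j-1)}`, each
`s j ∉ S j` minimizes the marginal gain over the remaining elements.  Then
for all interior indices `1 ≤ j ≤ n − 1` the marginal gains satisfy
`ρ_{s j}(S j) ≥ ρ_{s (j-1)}(S (j-1))`, and equivalently the insertion curve
is discretely convex: `F (S (j+1)) + F (S (j-1)) ≥ 2 F (S j)`. -/
theorem supermodular_insertion_curve_convex
    {α : Type*} [DecidableEq α] [Fintype α]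
    (F : Finset α → ℝ)
    (hsuper : ∀ A B : Finset α, A ⊆ B → ∀ e ∉ B,
      F (insert e A) - F A ≤ F (insert e B) - F B)
    (n : ℕ) (hn : n = Fintype.card α)
    (s : ℕ → α) (S : ℕ → Finset α)
    (hS : ∀ i, S i = (Finset.range i).image s)
    (hnotin : ∀ j < n, s j ∉ S j)
    (hmin : ∀ j < n, ∀ w ∉ S j,
      F (insert (s j) (S j)) - F (S j) ≤ F (insert w (S j)) - F (S j)) :
    (∀ j, 1 ≤ j → j ≤ n - 1 →
      F (insert (s (j - 1)) (S (j - 1))) - F (S (j - 1))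
        ≤ F (insert (s j) (S j)) - F (S j)) ∧
    (∀ j, 1 ≤ j → j ≤ n - 1 →
      2 * F (S j) ≤ F (S (j + 1)) + F (S (j - 1))) := by
  have hsucc : ∀ k, S (k + 1) = insert (s k) (S k) := by
    intro k
    rw [hS, hS, Finset.range_add_one, Finset.image_insert]
  have key : ∀ j, 1 ≤ j → j ≤ n - 1 →
      F (insert (s (j - 1)) (S (j - 1))) - F (S (j - 1))
        ≤ F (insert (s j) (S j)) - F (S j) := by
    intro j hj1 hj2
    have hn2 : 2 ≤ n := by omega
    have hjn : j < n := by omega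
    have hj1n : j - 1 < n := by omega
    have hsub : S (j - 1) ⊆ S j := by
      rw [hS, hS]
      exact Finset.image_subset_image (Finset.range_subset_range.2 (by omega))
    have hsjn : s j ∉ S (j - 1) := fun h => hnotin j hjn (hsub h)
    calc F (insert (s (j - 1)) (S (j - 1))) - F (S (j - 1))
        ≤ F (insert (s j) (S (j - 1))) - F (S (j - 1)) :=
          hmin (j - 1) hj1n (s j) hsjn
      _ ≤ F (insert (s j) (S j)) - F (S j) :=
          hsuper _ _ hsub (s j) (hnotin j hjn)
  refine ⟨key, fun j hj1 hj2 => ?_⟩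
  have h := key j hj1 hj2
  have h1 : S (j + 1) = insert (s j) (S j) := hsucc j
  have h2 := hsucc (j - 1)
  have hj : j - 1 + 1 = j := by omega
  rw [hj] at h2
  rw [h2] at h
  rw [h1, h2]
  linarith
end

section
/- Let V be a finite set and F : 2^V → ℝ a normalized, monotone, submodular set function. Let k ≥ 1, let v_1, …, v_k be distinct elements of V with S_0 = ∅ and S_i = {v_1, …, v_i}, and fix 1 ≤ l ≤ k. Let real parameters satisfy c_l > 0 and γ ≥ 0. Let R_l ⊆ V \ S_{l−1} and, for each 1 ≤ m ≤ l−1, let D_m ⊆ V \ S_{l−1}. Let T ⊆ V with |T| ≤ k. Assume: (i) T \ S_{l−1} ⊆ R_l ∪ D_1 ∪ ⋯ ∪ D_{l−1}; (ii) ρ_{v_l}(S_{l−1}) ≥ c_l · ρ_j(S_{l−1}) for every j ∈ R_l; (iii) for every 1 ≤ m ≤ l−1 and every x ∈ D_m, ρ_x(S_{m−1}) ≤ γ · ρ_{v_m}(S_{m−1}). Then F(T) ≤ F(S_{l−1}) + (k / c_l) · ρ_{v_l}(S_{l−1}) + k·γ · Σ_{m=1}^{l−1} ρ_{v_m}(S_{m−1}).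 -/
lemma phasewin_sum_marginals
    {α : Type*} [DecidableEq α]
    (F : Finset α → ℝ)
    (hsub : ∀ A B : Finset α, A ⊆ B → ∀ e ∉ B,
      F (insert e B) - F B ≤ F (insert e A) - F A)
    (A : Finset α) (B : Finset α) :
    F (A ∪ B) ≤ F A + ∑ x ∈ B \ A, (F (insert x A) - F A) := by
  classical
  induction B using Finset.induction_on with
  | empty => simp
  | @insert a B ha ih =>
    by_cases hA : a ∈ A
    · have h1 : A ∪ insert a B = A ∪ B := by
        rw [Finset.union_insert, Finset.insert_eq_self.mpr (Finset.mem_union_left B hA)]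
      have h2 : insert a B \ A = B \ A := Finset.insert_sdiff_of_mem B hA
      rw [h1, h2]; exact ih
    · have hnb : a ∉ A ∪ B := by simp [hA, ha]
      have h1 : A ∪ insert a B = insert a (A ∪ B) := Finset.union_insert a A B
      have h2 : insert a B \ A = insert a (B \ A) :=
        Finset.insert_sdiff_of_notMem B hA
      have hsub' := hsub A (A ∪ B) Finset.subset_union_left a hnb
      have hna : a ∉ B \ A := by simp [ha]
      rw [h1, h2, Finset.sum_insert hna]
      linarith

/-- **PhaseWin per-step bound.**  `F` is normalized, monotone and submodular
on the finite ground set `V = univ`.  `v 0, …, v (k-1)` are distinct and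
`S i = {v 0, …, v (i-1)}`; fix `1 ≤ l ≤ k` (so the paper's `v_l` is `v (l-1)`
and `S_{l-1}` is `S (l-1)`).  `R` is the candidate pool at step `l` and,
for each `m < l - 1`, `D m` is the pool pruned after (1-based) step `m+1`,
both disjoint from `S (l-1)`.  Assuming (i) `T \ S_{l-1} ⊆ R ∪ ⋃ D m`,
(ii) `ρ_{v_l}(S_{l-1}) ≥ c · ρ_j(S_{l-1})` for `j ∈ R`, and
(iii) `ρ_x(S m) ≤ γ · ρ_{v (m)}(S m)` for `m < l - 1`, `x ∈ D m`, we get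
`F T ≤ F S_{l-1} + (k/c) ρ_{v_l}(S_{l-1}) + kγ Σ_{m=1}^{l-1} ρ_{v_m}(S_{m-1})`. -/
theorem phasewin_per_step_bound
    {α : Type*} [DecidableEq α] [Fintype α]
    (F : Finset α → ℝ)
    (hnorm : F ∅ = 0)
    (hmono : ∀ A B : Finset α, A ⊆ B → F A ≤ F B)
    (hsub : ∀ A B : Finset α, A ⊆ B → ∀ e ∉ B,
      F (insert e B) - F B ≤ F (insert e A) - F A)
    (k : ℕ) (hk : 1 ≤ k)
    (v : ℕ → α)
    (hinj : ∀ i < k, ∀ j < k, v i = v j → i = j)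
    (S : ℕ → Finset α)
    (hS : ∀ i, S i = (Finset.range i).image v)
    (l : ℕ) (hl1 : 1 ≤ l) (hlk : l ≤ k)
    (c γ : ℝ) (hc : 0 < c) (hγ : 0 ≤ γ)
    (R : Finset α) (hRS : ∀ j ∈ R, j ∉ S (l - 1))
    (D : ℕ → Finset α) (hDS : ∀ m < l - 1, ∀ x ∈ D m, x ∉ S (l - 1))
    (T : Finset α) (hT : T.card ≤ k)
    (hcover : ∀ x ∈ T, x ∉ S (l - 1) → x ∈ R ∨ ∃ m < l - 1, x ∈ D m)
    (hsel : ∀ j ∈ R,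
      c * (F (insert j (S (l - 1))) - F (S (l - 1)))
        ≤ F (insert (v (l - 1)) (S (l - 1))) - F (S (l - 1)))
    (hdel : ∀ m < l - 1, ∀ x ∈ D m,
      F (insert x (S m)) - F (S m) ≤ γ * (F (insert (v m) (S m)) - F (S m))) :
    F T ≤ F (S (l - 1))
        + ((k : ℝ) / c) * (F (insert (v (l - 1)) (S (l - 1))) - F (S (l - 1)))
        + (k : ℝ) * γ *
            ∑ m ∈ Finset.range (l - 1), (F (insert (v m) (S m)) - F (S m)) := by
  classical
  set A := S (l - 1) with hA
  set ρ : ℝ := F (insert (v (l - 1)) A) - F A with hρ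
  set Ssum : ℝ := ∑ m ∈ Finset.range (l - 1), (F (insert (v m) (S m)) - F (S m))
    with hSsum
  have hρ0 : 0 ≤ ρ := by
    have := hmono A (insert (v (l - 1)) A) (Finset.subset_insert _ _)
    linarith [hρ ▸ le_refl ρ]
  have hterm0 : ∀ m, 0 ≤ F (insert (v m) (S m)) - F (S m) := by
    intro m
    have := hmono (S m) (insert (v m) (S m)) (Finset.subset_insert _ _)
    linarith
  have hSsum0 : 0 ≤ Ssum := hSsum ▸ Finset.sum_nonneg fun m _ => hterm0 m
  have hγS : 0 ≤ γ * Ssum := mul_nonneg hγ hSsum0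
  have hρc : 0 ≤ ρ / c := div_nonneg hρ0 hc.le
  -- each marginal of an element of T \ A is at most M := ρ/c + γ*Ssum
  have hbound : ∀ x ∈ T \ A, F (insert x A) - F A ≤ ρ / c + γ * Ssum := by
    intro x hx
    rw [Finset.mem_sdiff] at hx
    obtain ⟨hxT, hxA⟩ := hx
    rcases hcover x hxT hxA with hR | ⟨m, hm, hD⟩
    · have h0 := hsel x hR
      have h1 : F (insert x A) - F A ≤ ρ / c := by
        rw [le_div_iff₀ hc]; linarith
      linarith
    · have hsm : S m ⊆ A := by
        rw [hA, hS, hS]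
        exact Finset.image_subset_image (Finset.range_subset_range.mpr (le_of_lt hm))
      have h1 : F (insert x A) - F A ≤ F (insert x (S m)) - F (S m) :=
        hsub (S m) A hsm x hxA
      have h2 := hdel m hm x hD
      have h3 : F (insert (v m) (S m)) - F (S m) ≤ Ssum := by
        rw [hSsum]
        exact Finset.single_le_sum (fun i _ => hterm0 i) (Finset.mem_range.mpr hm)
      have h4 : γ * (F (insert (v m) (S m)) - F (S m)) ≤ γ * Ssum :=
        mul_le_mul_of_nonneg_left h3 hγ
      linarith
  have h1 : F T ≤ F (A ∪ T) := hmono T (A ∪ T) Finset.subset_union_right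
  have h2 := phasewin_sum_marginals F hsub A T
  have h3 : ∑ x ∈ T \ A, (F (insert x A) - F A)
      ≤ ((T \ A).card : ℝ) * (ρ / c + γ * Ssum) := by
    have := Finset.sum_le_card_nsmul (T \ A) _ _ hbound
    rw [nsmul_eq_mul] at this; exact this
  have hcard : ((T \ A).card : ℝ) ≤ (k : ℝ) := by
    have := Finset.card_le_card (Finset.sdiff_subset (s := T) (t := A))
    exact_mod_cast le_trans this hT
  have h4 : ((T \ A).card : ℝ) * (ρ / c + γ * Ssum)
      ≤ (k : ℝ) * (ρ / c + γ * Ssum) :=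
    mul_le_mul_of_nonneg_right hcard (by linarith)
  have h5 : (k : ℝ) * (ρ / c + γ * Ssum) = (k : ℝ) / c * ρ + (k : ℝ) * γ * Ssum := by
    ring
  linarith
end

section
/- Let V be a finite set and F : 2^V → ℝ a normalized, monotone, submodular set function. Let k ≥ 1, let v_1, …, v_k be distinct elements of V with S_0 = ∅ and S_i = {v_1, …, v_i}, and let T ⊆ V with |T| ≤ k. Let real parameters c_1, …, c_k > 0 and γ ≥ 0 be such that μ_l := 1 − c_l/k − c_l γ ≥ 0 for every l. Suppose that for every 1 ≤ l ≤ k there are sets R_l ⊆ V \ S_{l−1} and D_m^{(l)} ⊆ V \ S_{l−1} (for 1 ≤ m ≤ l−1) with: (i) T \ S_{l−1} ⊆ R_l ∪ ⋃_{m<l} D_m^{(l)}; (ii) ρ_{v_l}(S_{l−1}) ≥ c_l · ρ_j(S_{l−1}) for every j ∈ R_l; (iii) ρ_x(S_{m−1}) ≤ γ · ρ_{v_m}(S_{m−1}) for every m < l and x ∈ D_m^{(l)}. Then, with λ_l := c_l/k, F(S_k) ≥ F(T) · (λ_k + μ_k λ_{k−1} + μ_k μ_{k−1} λ_{k−2}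 + ⋯ + μ_k μ_{k−1} ⋯ μ_2 λ_1). -/
private lemma phasewin_sub_bound {α : Type*} [DecidableEq α] (F : Finset α → ℝ)
    (hsub : ∀ A B : Finset α, A ⊆ B → ∀ e ∉ B,
      F (insert e B) - F B ≤ F (insert e A) - F A)
    (B : Finset α) : ∀ A : Finset α,
    F (A ∪ B) - F B ≤ ∑ x ∈ A \ B, (F (insert x B) - F B) := by
  intro A
  induction A using Finset.induction_on with
  | empty => simp
  | @insert a A' ha ih =>
    by_cases hab : a ∈ B
    · have h1 : insert a A' ∪ B = A' ∪ B := by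
        rw [Finset.insert_union, Finset.insert_eq_self.2 (Finset.mem_union_right _ hab)]
      have h2 : insert a A' \ B = A' \ B := Finset.insert_sdiff_of_mem _ hab
      rw [h1, h2]; exact ih
    · have hnotin : a ∉ A' ∪ B := by
        simp only [Finset.mem_union]; tauto
      have h1 : insert a A' ∪ B = insert a (A' ∪ B) := Finset.insert_union a A' B
      have h2 : insert a A' \ B = insert a (A' \ B) :=
        Finset.insert_sdiff_of_notMem _ hab
      have h3 : a ∉ A' \ B := fun h => ha (Finset.mem_sdiff.1 h).1
      rw [h1, h2, Finset.sum_insert h3]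
      have h4 := hsub B (A' ∪ B) Finset.subset_union_right a hnotin
      linarith

/-- **PhaseWin approximation guarantee (phase-dependent ratios).**
`F` is normalized, monotone and submodular on the finite ground set
`V = univ`; `v 0, …, v (k-1)` are distinct with `S i = {v 0, …, v (i-1)}`;
`T ⊆ V`, `|T| ≤ k`.  The (1-based) step-`l` selection-ratio product is
`c l > 0`, the pruning parameter is `γ ≥ 0`, and
`μ l := 1 − c l / k − c l · γ ≥ 0`.  At each step `l` the candidate pool
`R l` and the pruned pools `D l m` (paper's `D_{m+1}^{(l)}`, `m < l - 1`)
satisfy the covering, selection and pruning conditions (i)–(iii).  Then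
`F (S k) ≥ F T · Σ_{l=1}^{k} λ l · Π_{j=l+1}^{k} μ j` with `λ l = c l / k`. -/
theorem phasewin_approx_guarantee_general
    {α : Type*} [DecidableEq α] [Fintype α]
    (F : Finset α → ℝ)
    (hnorm : F ∅ = 0)
    (hmono : ∀ A B : Finset α, A ⊆ B → F A ≤ F B)
    (hsub : ∀ A B : Finset α, A ⊆ B → ∀ e ∉ B,
      F (insert e B) - F B ≤ F (insert e A) - F A)
    (k : ℕ) (hk : 1 ≤ k)
    (v : ℕ → α)
    (hinj : ∀ i < k, ∀ j < k, v i = v j → i = j)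
    (S : ℕ → Finset α)
    (hS : ∀ i, S i = (Finset.range i).image v)
    (T : Finset α) (hT : T.card ≤ k)
    (c : ℕ → ℝ) (γ : ℝ) (hγ : 0 ≤ γ)
    (hc : ∀ l, 1 ≤ l → l ≤ k → 0 < c l)
    (hmu : ∀ l, 1 ≤ l → l ≤ k → 0 ≤ 1 - c l / (k : ℝ) - c l * γ)
    (R : ℕ → Finset α) (D : ℕ → ℕ → Finset α)
    (hRS : ∀ l, 1 ≤ l → l ≤ k → ∀ j ∈ R l, j ∉ S (l - 1))
    (hDS : ∀ l, 1 ≤ l → l ≤ k → ∀ m < l - 1, ∀ x ∈ D l m, x ∉ S (l - 1))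
    (hcover : ∀ l, 1 ≤ l → l ≤ k → ∀ x ∈ T, x ∉ S (l - 1) →
      x ∈ R l ∨ ∃ m < l - 1, x ∈ D l m)
    (hsel : ∀ l, 1 ≤ l → l ≤ k → ∀ j ∈ R l,
      c l * (F (insert j (S (l - 1))) - F (S (l - 1)))
        ≤ F (insert (v (l - 1)) (S (l - 1))) - F (S (l - 1)))
    (hdel : ∀ l, 1 ≤ l → l ≤ k → ∀ m < l - 1, ∀ x ∈ D l m,
      F (insert x (S m)) - F (S m) ≤ γ * (F (insert (v m) (S m)) - F (S m))) :
    F T * ∑ l ∈ Finset.Icc 1 k,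
        (c l / (k : ℝ)) *
          ∏ j ∈ Finset.Icc (l + 1) k, (1 - c j / (k : ℝ) - c j * γ)
      ≤ F (S k) := by
  have hk0 : (0:ℝ) < (k:ℝ) := by exact_mod_cast Nat.lt_of_lt_of_le Nat.zero_lt_one hk
  have hS0 : S 0 = ∅ := by simp [hS 0]
  have hSsucc : ∀ i, S (i+1) = insert (v i) (S i) := by
    intro i; rw [hS, hS, Finset.range_add_one, Finset.image_insert]
  have hSmono : ∀ m n : ℕ, m ≤ n → S m ⊆ S n := by
    intro m n h; rw [hS, hS]
    exact Finset.image_subset_image (Finset.range_subset_range.2 h)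
  have hF0 : ∀ A, 0 ≤ F A := fun A => hnorm ▸ hmono ∅ A (Finset.empty_subset A)
  have key : ∀ l, l ≤ k →
      F T * ∑ i ∈ Finset.Icc 1 l,
        (c i / (k : ℝ)) *
          ∏ j ∈ Finset.Icc (i + 1) l, (1 - c j / (k : ℝ) - c j * γ)
      ≤ F (S l) := by
    intro l
    induction l with
    | zero => intro _; simp [hS0, hnorm]
    | succ n ih =>
      intro hnk
      have hn1 : 1 ≤ n + 1 := by omega
      have hnk' : n ≤ k := Nat.le_of_succ_le hnk
      have ihn := ih hnk'
      -- abbreviations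
      have hcpos := hc (n+1) hn1 hnk
      have hμ0 := hmu (n+1) hn1 hnk
      have hvn : v n ∉ S n := by
        intro hmem
        rw [hS] at hmem
        obtain ⟨j, hj, hji⟩ := Finset.mem_image.1 hmem
        rw [Finset.mem_range] at hj
        have := hinj j (by omega) n (by omega) hji
        omega
      have hins : F (insert (v n) (S n)) = F (S (n+1)) := by rw [hSsucc]
      have hδ0 : 0 ≤ F (S (n+1)) - F (S n) :=
        sub_nonneg.2 (hmono _ _ (hSmono n (n+1) (Nat.le_succ n)))
      -- per-element bound
      have helem : ∀ x ∈ T \ S n,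
          F (insert x (S n)) - F (S n)
            ≤ (F (S (n+1)) - F (S n)) / c (n+1) + γ * F (S n) := by
        intro x hx
        obtain ⟨hxT, hxS⟩ := Finset.mem_sdiff.1 hx
        have hγF : 0 ≤ γ * F (S n) := mul_nonneg hγ (hF0 _)
        have hdc : 0 ≤ (F (S (n+1)) - F (S n)) / c (n+1) :=
          div_nonneg hδ0 hcpos.le
        rcases hcover (n+1) hn1 hnk x hxT hxS with hR | ⟨m, hm, hD⟩
        · have h1 := hsel (n+1) hn1 hnk x hR
          simp only [Nat.add_sub_cancel] at h1
          rw [hins] at h1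
          have h2 : F (insert x (S n)) - F (S n) ≤ (F (S (n+1)) - F (S n)) / c (n+1) :=
            (le_div_iff₀' hcpos).2 h1
          linarith
        · have hm' : m < n := by omega
          have h1 := hsub (S m) (S n) (hSmono m n hm'.le) x hxS
          have h2 := hdel (n+1) hn1 hnk m (by omega) x hD
          rw [← hSsucc] at h2
          have h3 : F (S (m+1)) - F (S m) ≤ F (S n) := by
            have h4 := hmono _ _ (hSmono (m+1) n hm')
            have h5 := hF0 (S m)
            linarith
          have h6 : γ * (F (S (m+1)) - F (S m)) ≤ γ * F (S n) :=
            mul_le_mul_of_nonneg_left h3 hγ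
          linarith
      -- sum bound
      have hsumbd : F T - F (S n)
          ≤ (k:ℝ) * ((F (S (n+1)) - F (S n)) / c (n+1) + γ * F (S n)) := by
        have h1 : F T ≤ F (T ∪ S n) := hmono _ _ Finset.subset_union_left
        have h2 := phasewin_sub_bound F hsub (S n) T
        have h3 : ∑ x ∈ T \ S n, (F (insert x (S n)) - F (S n))
            ≤ ((T \ S n).card : ℝ) * ((F (S (n+1)) - F (S n)) / c (n+1) + γ * F (S n)) := by
          calc ∑ x ∈ T \ S n, (F (insert x (S n)) - F (S n))
              ≤ ∑ _x ∈ T \ S n, ((F (S (n+1)) - F (S n)) / c (n+1) + γ * F (S n)) :=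
                Finset.sum_le_sum helem
            _ = ((T \ S n).card : ℝ) * ((F (S (n+1)) - F (S n)) / c (n+1) + γ * F (S n)) := by
                rw [Finset.sum_const, nsmul_eq_mul]
        have hbdnn : 0 ≤ (F (S (n+1)) - F (S n)) / c (n+1) + γ * F (S n) :=
          add_nonneg (div_nonneg hδ0 hcpos.le) (mul_nonneg hγ (hF0 _))
        have hcard : ((T \ S n).card : ℝ) ≤ (k:ℝ) := by
          have := (Finset.card_le_card (Finset.sdiff_subset (s := T) (t := S n))).trans hT
          exact_mod_cast this
        have h4 := mul_le_mul_of_nonneg_right hcard hbdnn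
        linarith
      -- step inequality
      have hstep : c (n+1) / (k:ℝ) * (F T - F (S n))
          ≤ (F (S (n+1)) - F (S n)) + c (n+1) * γ * F (S n) := by
        have h := mul_le_mul_of_nonneg_left hsumbd (div_nonneg hcpos.le hk0.le)
        have heq : (c (n+1) / (k:ℝ)) *
            ((k:ℝ) * ((F (S (n+1)) - F (S n)) / c (n+1) + γ * F (S n)))
            = (F (S (n+1)) - F (S n)) + c (n+1) * γ * F (S n) := by
          field_simp
        rw [heq] at h
        exact h
      -- sum identity
      have hsum : ∑ i ∈ Finset.Icc 1 (n+1),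
            (c i / (k : ℝ)) * ∏ j ∈ Finset.Icc (i + 1) (n+1), (1 - c j / (k : ℝ) - c j * γ)
          = c (n+1) / (k:ℝ) + (1 - c (n+1) / (k:ℝ) - c (n+1) * γ) *
              ∑ i ∈ Finset.Icc 1 n,
                (c i / (k : ℝ)) * ∏ j ∈ Finset.Icc (i + 1) n, (1 - c j / (k : ℝ) - c j * γ) := by
        rw [Finset.sum_Icc_succ_top hn1]
        have h1 : Finset.Icc (n+1+1) (n+1) = ∅ := Finset.Icc_eq_empty (by omega)
        rw [h1, Finset.prod_empty, mul_one]
        rw [Finset.mul_sum]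
        rw [Finset.sum_congr rfl (fun i hi => ?_)]
        · ring
        · have hi' : i + 1 ≤ n + 1 := by
            have := (Finset.mem_Icc.1 hi).2; omega
          rw [Finset.prod_Icc_succ_top hi']
          ring
      rw [hsum]
      have hμGn := mul_le_mul_of_nonneg_left ihn hμ0
      have hfinal : F T * (c (n+1) / (k:ℝ) + (1 - c (n+1) / (k:ℝ) - c (n+1) * γ) *
            ∑ i ∈ Finset.Icc 1 n,
              (c i / (k : ℝ)) * ∏ j ∈ Finset.Icc (i + 1) n, (1 - c j / (k : ℝ) - c j * γ))
          = c (n+1) / (k:ℝ) * F T + (1 - c (n+1) / (k:ℝ) - c (n+1) * γ) *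
            (F T * ∑ i ∈ Finset.Icc 1 n,
              (c i / (k : ℝ)) * ∏ j ∈ Finset.Icc (i + 1) n, (1 - c j / (k : ℝ) - c j * γ)) := by
        ring
      rw [hfinal]
      nlinarith [hstep, hμGn]
  exact key k le_rfl
end

section
/- Let V be a finite set and F : 2^V → ℝ a normalized, monotone, submodular set function. Let k ≥ 1, let v_1, …, v_k be distinct elements of V with S_0 = ∅ and S_i = {v_1, …, v_i}, and let T ⊆ V with |T| ≤ k. Let real parameters c > 0 and γ ≥ 0 be such that μ := 1 − c/k − cγ satisfies 0 ≤ μ < 1, and set λ := c/k. Suppose that for every 1 ≤ l ≤ k there are sets R_l ⊆ V \ S_{l−1} and D_m^{(l)} ⊆ V \ S_{l−1} (for 1 ≤ m ≤ l−1) with: (i) T \ S_{l−1} ⊆ R_l ∪ ⋃_{m<l} D_m^{(l)}; (ii) ρ_{v_l}(S_{l−1}) ≥ c · ρ_j(S_{l−1}) for every j ∈ R_l; (iii) ρ_x(S_{m−1}) ≤ γ · ρ_{v_m}(S_{m−1}) for every m < l and x ∈ D_m^{(l)}. Then F(S_k) ≥ (λ (1 − μ^k) / (1 − μ)) · F(T).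 -/
/-- **PhaseWin approximation guarantee (constant ratios, geometric form).**
`F` is normalized, monotone and submodular on the finite ground set
`V = univ`; `v 0, …, v (k-1)` are distinct with `S i = {v 0, …, v (i-1)}`;
`T ⊆ V`, `|T| ≤ k`.  With a constant selection-ratio product `c > 0`,
pruning parameter `γ ≥ 0`, `μ := 1 − c/k − cγ ∈ [0, 1)`, and `λ := c/k`,
if the PhaseWin conditions (i)–(iii) hold at every step, then
`F (S k) ≥ (λ (1 − μ^k) / (1 − μ)) · F T`. -/
theorem phasewin_approx_guarantee_constant
    {α : Type*} [DecidableEq α] [Fintype α]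
    (F : Finset α → ℝ)
    (hnorm : F ∅ = 0)
    (hmono : ∀ A B : Finset α, A ⊆ B → F A ≤ F B)
    (hsub : ∀ A B : Finset α, A ⊆ B → ∀ e ∉ B,
      F (insert e B) - F B ≤ F (insert e A) - F A)
    (k : ℕ) (hk : 1 ≤ k)
    (v : ℕ → α)
    (hinj : ∀ i < k, ∀ j < k, v i = v j → i = j)
    (S : ℕ → Finset α)
    (hS : ∀ i, S i = (Finset.range i).image v)
    (T : Finset α) (hT : T.card ≤ k)
    (c γ : ℝ) (hc : 0 < c) (hγ : 0 ≤ γ)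
    (hmu0 : 0 ≤ 1 - c / (k : ℝ) - c * γ)
    (hmu1 : 1 - c / (k : ℝ) - c * γ < 1)
    (R : ℕ → Finset α) (D : ℕ → ℕ → Finset α)
    (hRS : ∀ l, 1 ≤ l → l ≤ k → ∀ j ∈ R l, j ∉ S (l - 1))
    (hDS : ∀ l, 1 ≤ l → l ≤ k → ∀ m < l - 1, ∀ x ∈ D l m, x ∉ S (l - 1))
    (hcover : ∀ l, 1 ≤ l → l ≤ k → ∀ x ∈ T, x ∉ S (l - 1) →
      x ∈ R l ∨ ∃ m < l - 1, x ∈ D l m)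
    (hsel : ∀ l, 1 ≤ l → l ≤ k → ∀ j ∈ R l,
      c * (F (insert j (S (l - 1))) - F (S (l - 1)))
        ≤ F (insert (v (l - 1)) (S (l - 1))) - F (S (l - 1)))
    (hdel : ∀ l, 1 ≤ l → l ≤ k → ∀ m < l - 1, ∀ x ∈ D l m,
      F (insert x (S m)) - F (S m) ≤ γ * (F (insert (v m) (S m)) - F (S m))) :
    (c / (k : ℝ)) * (1 - (1 - c / (k : ℝ) - c * γ) ^ k)
        / (1 - (1 - c / (k : ℝ) - c * γ)) * F T
      ≤ F (S k) := by
  classical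
  set μ : ℝ := 1 - c / (k : ℝ) - c * γ with hμdef
  have hk0 : (0:ℝ) < (k : ℝ) := by exact_mod_cast hk
  have hlam : (0:ℝ) < c / (k : ℝ) := div_pos hc hk0
  have hSmono : ∀ a b : ℕ, a ≤ b → S a ⊆ S b := by
    intro a b hab
    rw [hS, hS]
    exact Finset.image_subset_image (Finset.range_subset_range.2 hab)
  have hFnonneg : ∀ A : Finset α, 0 ≤ F A := by
    intro A
    have h := hmono ∅ A (Finset.empty_subset A)
    rw [hnorm] at h
    exact h
  have hSsucc : ∀ l : ℕ, S (l + 1) = insert (v l) (S l) := by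
    intro l
    rw [hS, hS, Finset.range_add_one, Finset.image_insert]
  -- marginal-gain sum bound from submodularity
  have marg : ∀ (B s : Finset α), (∀ x ∈ s, x ∉ B) →
      F (B ∪ s) - F B ≤ ∑ x ∈ s, (F (insert x B) - F B) := by
    intro B s
    induction s using Finset.induction_on with
    | empty => intro _; simp
    | @insert a s ha ih =>
      intro h
      have haB : a ∉ B := h a (Finset.mem_insert_self a s)
      have haBs : a ∉ B ∪ s := by simp [haB, ha]
      have h1 : F (insert a (B ∪ s)) - F (B ∪ s) ≤ F (insert a B) - F B :=
        hsub B (B ∪ s) Finset.subset_union_left a haBs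
      have h2 := ih (fun x hx => h x (Finset.mem_insert_of_mem hx))
      have hBeq : B ∪ insert a s = insert a (B ∪ s) := by
        ext x
        simp only [Finset.mem_union, Finset.mem_insert]
        tauto
      rw [hBeq, Finset.sum_insert ha]
      linarith
  -- one-step bound
  have step : ∀ l, l < k → (c / (k : ℝ)) * F T + μ * F (S l) ≤ F (S (l + 1)) := by
    intro l hl
    have h1l : 1 ≤ l + 1 := by omega
    have hlk : l + 1 ≤ k := by omega
    have hsub1 : l + 1 - 1 = l := by omega
    set g : ℝ := F (S (l + 1)) - F (S l) with hg
    have hg0 : 0 ≤ g := by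
      have := hmono (S l) (S (l + 1)) (hSmono l (l + 1) (by omega))
      simp only [hg]
      linarith
    have key : ∀ x ∈ T \ S l,
        F (insert x (S l)) - F (S l) ≤ (1 / c) * g + γ * F (S l) := by
      intro x hx
      rw [Finset.mem_sdiff] at hx
      have hcov := hcover (l + 1) h1l hlk x hx.1 (by rw [hsub1]; exact hx.2)
      rw [hsub1] at hcov
      rcases hcov with hR | ⟨m, hm, hD⟩
      · have hsel' := hsel (l + 1) h1l hlk x hR
        rw [hsub1, ← hSsucc l] at hsel'
        have h1 : F (insert x (S l)) - F (S l) ≤ (1 / c) * g := by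
          rw [div_mul_eq_mul_div, le_div_iff₀ hc]
          simp only [hg] at hsel' ⊢
          linarith
        have h2 : 0 ≤ γ * F (S l) := mul_nonneg hγ (hFnonneg _)
        linarith
      · have hxS : x ∉ S l := hx.2
        have hmlt : m < l := hm
        have hmono1 : F (insert x (S l)) - F (S l) ≤ F (insert x (S m)) - F (S m) :=
          hsub (S m) (S l) (hSmono m l (le_of_lt hmlt)) x hxS
        have hdel' := hdel (l + 1) h1l hlk m (by omega) x hD
        rw [← hSsucc m] at hdel'
        have hgm : F (S (m + 1)) - F (S m) ≤ F (S l) := by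
          have h1 := hmono (S (m + 1)) (S l) (hSmono (m + 1) l (by omega))
          have h2 := hFnonneg (S m)
          linarith
        have h3 : γ * (F (S (m + 1)) - F (S m)) ≤ γ * F (S l) :=
          mul_le_mul_of_nonneg_left hgm hγ
        have h4 : 0 ≤ (1 / c) * g := mul_nonneg (by positivity) hg0
        linarith
    have hchain : F T ≤ F (S l) + (k : ℝ) * ((1 / c) * g + γ * F (S l)) := by
      have hTsub : T ⊆ S l ∪ (T \ S l) := by
        intro x hx
        by_cases h : x ∈ S l
        · exact Finset.mem_union_left _ h
        · exact Finset.mem_union_right _ (Finset.mem_sdiff.2 ⟨hx, h⟩)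
      have h1 : F T ≤ F (S l ∪ (T \ S l)) := hmono _ _ hTsub
      have h2 := marg (S l) (T \ S l) (fun x hx => (Finset.mem_sdiff.1 hx).2)
      have hcard : ((T \ S l).card : ℝ) ≤ (k : ℝ) := by
        have h3 : (T \ S l).card ≤ T.card := Finset.card_le_card Finset.sdiff_subset
        exact_mod_cast le_trans h3 hT
      have hterm : 0 ≤ (1 / c) * g + γ * F (S l) := by
        have h5 := mul_nonneg hγ (hFnonneg (S l))
        have h6 : 0 ≤ (1 / c) * g := mul_nonneg (by positivity) hg0
        linarith
      have h3 : ∑ x ∈ T \ S l, (F (insert x (S l)) - F (S l))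
          ≤ ((T \ S l).card : ℝ) * ((1 / c) * g + γ * F (S l)) := by
        calc ∑ x ∈ T \ S l, (F (insert x (S l)) - F (S l))
            ≤ ∑ _x ∈ T \ S l, ((1 / c) * g + γ * F (S l)) :=
              Finset.sum_le_sum key
          _ = ((T \ S l).card : ℝ) * ((1 / c) * g + γ * F (S l)) := by
              rw [Finset.sum_const, nsmul_eq_mul]
      have h4 : ((T \ S l).card : ℝ) * ((1 / c) * g + γ * F (S l))
          ≤ (k : ℝ) * ((1 / c) * g + γ * F (S l)) :=
        mul_le_mul_of_nonneg_right hcard hterm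
      linarith
    have e1 : (c / (k : ℝ)) * (F (S l) + (k : ℝ) * ((1 / c) * g + γ * F (S l)))
        = (c / (k : ℝ) + c * γ) * F (S l) + g := by
      field_simp
      ring
    have h5 : (c / (k : ℝ)) * F T
        ≤ (c / (k : ℝ)) * (F (S l) + (k : ℝ) * ((1 / c) * g + γ * F (S l))) :=
      mul_le_mul_of_nonneg_left hchain (le_of_lt hlam)
    rw [e1] at h5
    simp only [hμdef, hg] at h5 ⊢
    linarith
  -- induction: partial geometric sums
  have ind : ∀ l, l ≤ k →
      (c / (k : ℝ)) * (∑ i ∈ Finset.range l, μ ^ i) * F T ≤ F (S l) := by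
    intro l
    induction l with
    | zero =>
      intro _
      have h0 : S 0 = ∅ := by rw [hS]; simp
      rw [h0, hnorm]
      simp
    | succ n ih =>
      intro h
      have h1 := step n (by omega)
      have h2 := ih (by omega)
      have h3 : μ * ((c / (k : ℝ)) * (∑ i ∈ Finset.range n, μ ^ i) * F T)
          ≤ μ * F (S n) := mul_le_mul_of_nonneg_left h2 hmu0
      have hgeom : (∑ i ∈ Finset.range (n + 1), μ ^ i)
          = μ * (∑ i ∈ Finset.range n, μ ^ i) + 1 := geom_sum_succ
      rw [hgeom]
      nlinarith [h1, h3]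
  have hfin := ind k le_rfl
  have hne : μ ≠ 1 := ne_of_lt hmu1
  have hsum : (∑ i ∈ Finset.range k, μ ^ i) = (1 - μ ^ k) / (1 - μ) := by
    rw [geom_sum_eq hne, ← neg_div_neg_eq]
    ring_nf
  calc (c / (k : ℝ)) * (1 - μ ^ k) / (1 - μ) * F T
      = (c / (k : ℝ)) * ((1 - μ ^ k) / (1 - μ)) * F T := by ring
    _ = (c / (k : ℝ)) * (∑ i ∈ Finset.range k, μ ^ i) * F T := by rw [hsum]
    _ ≤ F (S k) := hfin
end

section
/- Let V be a finite set and F : 2^V → ℝ a normalized, monotone, submodular set function. Let k ≥ 1 be an integer, let real parameters c > 0 and γ ≥ 0 satisfy c(1/k + γ) ≤ 1, let v_1, …, v_k be distinct elements of V with S_0 = ∅ and S_i = {v_1, …, v_i}, and let T ⊆ V with |T| ≤ k. Suppose that for every 1 ≤ l ≤ k there are sets R_l ⊆ V \ S_{l−1} and D_m^{(l)} ⊆ V \ S_{l−1} (for 1 ≤ m ≤ l−1) with: (i) T \ S_{l−1} ⊆ R_l ∪ ⋃_{m<l} D_m^{(l)}; (ii) ρ_{v_l}(S_{l−1}) ≥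 c · ρ_j(S_{l−1}) for every j ∈ R_l; (iii) ρ_x(S_{m−1}) ≤ γ · ρ_{v_m}(S_{m−1}) for every m < l and x ∈ D_m^{(l)}. Then F(S_k) ≥ ((1 − e^{−c}) / (1 + kγ)) · F(T). In particular, taking c = 1 and γ = 0 (exact selection, no pruning) recovers F(S_k) ≥ (1 − 1/e) · F(T). -/
open Finset

lemma phasewin_sum_marginal {α : Type*} [DecidableEq α] (F : Finset α → ℝ)
    (hsub : ∀ A B : Finset α, A ⊆ B → ∀ e ∉ B,
      F (insert e B) - F B ≤ F (insert e A) - F A)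
    (A B : Finset α) :
    F (A ∪ B) ≤ F A + ∑ x ∈ B \ A, (F (insert x A) - F A) := by
  induction B using Finset.induction_on with
  | empty => simp
  | @insert b B hb ih =>
    by_cases hbA : b ∈ A
    · have h1 : A ∪ insert b B = A ∪ B := by
        rw [Finset.union_insert, Finset.insert_eq_self.2 (Finset.mem_union_left _ hbA)]
      have h2 : insert b B \ A = B \ A := Finset.insert_sdiff_of_mem _ hbA
      rw [h1, h2]; exact ih
    · have hbAB : b ∉ A ∪ B := by simp [hbA, hb]
      have h1 : A ∪ insert b B = insert b (A ∪ B) := Finset.union_insert b A B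
      have h2 : insert b B \ A = insert b (B \ A) := by
        rw [Finset.insert_sdiff_of_notMem _ hbA]
      have h3 : b ∉ B \ A := fun h => hb (Finset.mem_sdiff.1 h).1
      rw [h1, h2, Finset.sum_insert h3]
      have := hsub A (A ∪ B) Finset.subset_union_left b hbAB
      linarith

/-- **Explicit PhaseWin approximation guarantee.**  `F` is normalized,
monotone and submodular on the finite ground set `V = univ`;
`v 0, …, v (k-1)` are distinct with `S i = {v 0, …, v (i-1)}`; `T ⊆ V`,
`|T| ≤ k`.  With constant selection-ratio product `c > 0` and pruning
parameter `γ ≥ 0` satisfying `c (1/k + γ) ≤ 1`, if the PhaseWin conditions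
(i)–(iii) hold at every step, then
`F (S k) ≥ ((1 − e^{−c}) / (1 + kγ)) · F T`.
(Taking `c = 1`, `γ = 0` recovers the classical `1 − 1/e` guarantee.) -/
theorem phasewin_approx_guarantee_explicit
    {α : Type*} [DecidableEq α] [Fintype α]
    (F : Finset α → ℝ)
    (hnorm : F ∅ = 0)
    (hmono : ∀ A B : Finset α, A ⊆ B → F A ≤ F B)
    (hsub : ∀ A B : Finset α, A ⊆ B → ∀ e ∉ B,
      F (insert e B) - F B ≤ F (insert e A) - F A)
    (k : ℕ) (hk : 1 ≤ k)
    (c γ : ℝ) (hc : 0 < c) (hγ : 0 ≤ γ)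
    (hck : c * (1 / (k : ℝ) + γ) ≤ 1)
    (v : ℕ → α)
    (hinj : ∀ i < k, ∀ j < k, v i = v j → i = j)
    (S : ℕ → Finset α)
    (hS : ∀ i, S i = (Finset.range i).image v)
    (T : Finset α) (hT : T.card ≤ k)
    (R : ℕ → Finset α) (D : ℕ → ℕ → Finset α)
    (hRS : ∀ l, 1 ≤ l → l ≤ k → ∀ j ∈ R l, j ∉ S (l - 1))
    (hDS : ∀ l, 1 ≤ l → l ≤ k → ∀ m < l - 1, ∀ x ∈ D l m, x ∉ S (l - 1))
    (hcover : ∀ l, 1 ≤ l → l ≤ k → ∀ x ∈ T, x ∉ S (l - 1) →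
      x ∈ R l ∨ ∃ m < l - 1, x ∈ D l m)
    (hsel : ∀ l, 1 ≤ l → l ≤ k → ∀ j ∈ R l,
      c * (F (insert j (S (l - 1))) - F (S (l - 1)))
        ≤ F (insert (v (l - 1)) (S (l - 1))) - F (S (l - 1)))
    (hdel : ∀ l, 1 ≤ l → l ≤ k → ∀ m < l - 1, ∀ x ∈ D l m,
      F (insert x (S m)) - F (S m) ≤ γ * (F (insert (v m) (S m)) - F (S m))) :
    ((1 - Real.exp (-c)) / (1 + (k : ℝ) * γ)) * F T ≤ F (S k) := by
  have hkpos : (0:ℝ) < (k:ℝ) := by exact_mod_cast Nat.lt_of_lt_of_le Nat.zero_lt_one hk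
  have hSmono : ∀ a b : ℕ, a ≤ b → S a ⊆ S b := by
    intro a b hab
    rw [hS a, hS b]
    exact Finset.image_subset_image (Finset.range_subset_range.2 hab)
  have hSsucc : ∀ l : ℕ, S (l + 1) = insert (v l) (S l) := by
    intro l
    rw [hS (l + 1), hS l, Finset.range_add_one, Finset.image_insert]
  have hS0 : F (S 0) = 0 := by rw [hS 0]; simp [hnorm]
  have hSnonneg : ∀ l : ℕ, 0 ≤ F (S l) := by
    intro l
    have := hmono ∅ (S l) (Finset.empty_subset _)
    rw [hnorm] at this; exact this
  have hδ : ∀ l : ℕ, 0 ≤ F (S (l + 1)) - F (S l) :=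
    fun l => sub_nonneg.2 (hmono _ _ (hSmono l (l + 1) (Nat.le_succ l)))
  -- Key per-step inequality (division-free form)
  have key : ∀ l : ℕ, l < k →
      c * (F T - (1 + (k:ℝ) * γ) * F (S l)) ≤ (k:ℝ) * (F (S (l + 1)) - F (S l)) := by
    intro l hl
    set B : ℝ := (F (S (l + 1)) - F (S l)) / c + γ * F (S l) with hB
    have hBnn : 0 ≤ B := add_nonneg (div_nonneg (hδ l) hc.le) (mul_nonneg hγ (hSnonneg l))
    have hl1 : 1 ≤ l + 1 := Nat.le_add_left 1 l
    have hlk : l + 1 ≤ k := hl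
    have hsub1 : (l + 1) - 1 = l := by omega
    -- each marginal over T \ S l is bounded by B
    have hx : ∀ x ∈ T \ S l, F (insert x (S l)) - F (S l) ≤ B := by
      intro x hxmem
      obtain ⟨hxT, hxS⟩ := Finset.mem_sdiff.1 hxmem
      have hxS' : x ∉ S ((l + 1) - 1) := by rwa [hsub1]
      rcases hcover (l + 1) hl1 hlk x hxT hxS' with hR | ⟨m, hm, hD⟩
      · have := hsel (l + 1) hl1 hlk x hR
        rw [hsub1, ← hSsucc l] at this
        have h1 : F (insert x (S l)) - F (S l) ≤ (F (S (l + 1)) - F (S l)) / c := by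
          rw [le_div_iff₀ hc]; linarith [this]
        have h2 : 0 ≤ γ * F (S l) := mul_nonneg hγ (hSnonneg l)
        rw [hB]; linarith
      · rw [hsub1] at hm
        have hsm : F (insert x (S l)) - F (S l) ≤ F (insert x (S m)) - F (S m) :=
          hsub (S m) (S l) (hSmono m l hm.le) x hxS
        have hd := hdel (l + 1) hl1 hlk m (by rwa [hsub1]) x hD
        rw [← hSsucc m] at hd
        have h1 : F (S (m + 1)) - F (S m) ≤ F (S l) := by
          have h1a := hmono (S (m + 1)) (S l) (hSmono (m + 1) l hm)
          have h1b := hSnonneg m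
          linarith
        have h2 : γ * (F (S (m + 1)) - F (S m)) ≤ γ * F (S l) :=
          mul_le_mul_of_nonneg_left h1 hγ
        have h3 : 0 ≤ (F (S (l + 1)) - F (S l)) / c := div_nonneg (hδ l) hc.le
        rw [hB]; linarith
    -- sum bound
    have hsum : F T ≤ F (S l) + (k:ℝ) * B := by
      have h1 : F T ≤ F (S l ∪ T) := hmono _ _ Finset.subset_union_right
      have h2 := phasewin_sum_marginal F hsub (S l) T
      have h3 : ∑ x ∈ T \ S l, (F (insert x (S l)) - F (S l)) ≤ (T \ S l).card • B :=
        Finset.sum_le_card_nsmul _ _ _ hx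
      have h4 : ((T \ S l).card : ℝ) ≤ (k : ℝ) := by
        have h4n : (T \ S l).card ≤ k := le_trans (Finset.card_le_card Finset.sdiff_subset) hT
        exact_mod_cast h4n
      have h5 : ((T \ S l).card : ℝ) * B ≤ (k:ℝ) * B := mul_le_mul_of_nonneg_right h4 hBnn
      rw [nsmul_eq_mul] at h3
      linarith
    have hexp : (k:ℝ) * B = (k:ℝ) * (F (S (l + 1)) - F (S l)) / c + (k:ℝ) * γ * F (S l) := by
      rw [hB]; ring
    rw [hexp] at hsum
    have h6 : F T - (1 + (k:ℝ) * γ) * F (S l) ≤ (k:ℝ) * (F (S (l + 1)) - F (S l)) / c := by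
      linarith
    calc c * (F T - (1 + (k:ℝ) * γ) * F (S l))
        = (F T - (1 + (k:ℝ) * γ) * F (S l)) * c := mul_comm _ _
      _ ≤ (k:ℝ) * (F (S (l + 1)) - F (S l)) := by
          rw [← le_div_iff₀ hc]; exact h6
  -- geometric decay
  set q : ℝ := 1 - c * (1 / (k:ℝ) + γ) with hq
  have hq0 : 0 ≤ q := by rw [hq]; linarith
  have hqr : q = 1 - c * (1 + (k:ℝ) * γ) / (k:ℝ) := by
    rw [hq]
    have h0 : c * (1 / (k:ℝ) + γ) = c * (1 + (k:ℝ) * γ) / (k:ℝ) := by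
      rw [eq_div_iff hkpos.ne']
      field_simp
    rw [h0]
  have claim : ∀ l : ℕ, l ≤ k → F T - (1 + (k:ℝ) * γ) * F (S l) ≤ q ^ l * F T := by
    intro l
    induction l with
    | zero => intro _; rw [hS0]; simp
    | succ l ih =>
      intro hlk
      have hl : l < k := hlk
      have IH := ih hl.le
      have hkey := key l hl
      set A : ℝ := F T - (1 + (k:ℝ) * γ) * F (S l) with hA
      have h5 : c * (1 + (k:ℝ) * γ) / (k:ℝ) * A ≤ (1 + (k:ℝ) * γ) * (F (S (l + 1)) - F (S l)) := by
        rw [div_mul_eq_mul_div, div_le_iff₀ hkpos]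
        have h1kγ : (0:ℝ) ≤ 1 + (k:ℝ) * γ := by positivity
        nlinarith [mul_le_mul_of_nonneg_left hkey h1kγ]
      have h6 : F T - (1 + (k:ℝ) * γ) * F (S (l + 1)) ≤ q * A := by
        have hqA : q * A = A - c * (1 + (k:ℝ) * γ) / (k:ℝ) * A := by rw [hqr]; ring
        rw [hqA, hA]; linarith
      have h7 : q * A ≤ q * (q ^ l * F T) := mul_le_mul_of_nonneg_left IH hq0
      calc F T - (1 + (k:ℝ) * γ) * F (S (l + 1)) ≤ q * A := h6
        _ ≤ q * (q ^ l * F T) := h7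
        _ = q ^ (l + 1) * F T := by ring
  have hclaimk := claim k le_rfl
  have hT0 : 0 ≤ F T := by
    have := hmono ∅ T (Finset.empty_subset _); rw [hnorm] at this; exact this
  -- q^k ≤ exp(-c)
  have hqexp : q ≤ Real.exp (-(c / (k:ℝ))) := by
    have h1 : -(c / (k:ℝ)) + 1 ≤ Real.exp (-(c / (k:ℝ))) := Real.add_one_le_exp _
    have h2 : q ≤ 1 - c / (k:ℝ) := by
      rw [hq]
      have : 0 ≤ c * γ := mul_nonneg hc.le hγ
      have hexpand : c * (1 / (k:ℝ) + γ) = c / (k:ℝ) + c * γ := by ring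
      linarith [hexpand ▸ le_refl (c * (1 / (k:ℝ) + γ))]
    have h3 : 1 - c / (k:ℝ) = -(c / (k:ℝ)) + 1 := by ring
    linarith
  have hqk : q ^ k ≤ Real.exp (-c) := by
    calc q ^ k ≤ (Real.exp (-(c / (k:ℝ)))) ^ k := pow_le_pow_left₀ hq0 hqexp k
      _ = Real.exp ((k:ℝ) * (-(c / (k:ℝ)))) := (Real.exp_nat_mul _ k).symm
      _ = Real.exp (-c) := by
          congr 1
          field_simp
  have h8 : q ^ k * F T ≤ Real.exp (-c) * F T := mul_le_mul_of_nonneg_right hqk hT0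
  have hpos : (0:ℝ) < 1 + (k:ℝ) * γ := by positivity
  rw [div_mul_eq_mul_div, div_le_iff₀ hpos]
  nlinarith [hclaimk, h8]
end
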